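/- Let A = S(V)#_f G, let α : A → A be the algebra automorphism determined by a bijective k[G]-linear map α̂ : V → V and a group homomorphism χ_α : G → k^× (α(v) = α̂(v), α(w_g) = χ_α(g)w_g), and let ς : A → A be the algebra automorphism determined likewise by a bijective k[G]-linear ς̂ : V → V and a group homomorphism χ_ς. Let δ̂_1, δ̂_2 : V → A be k-linear maps and δ̄_1, δ̄_2 : G → A maps. Then: (1) the assignment δ_1(v_1⋯v_m w_g) := Σ_{j=1}^m α(v_1⋯v_{j-1})δ̂_1(v_j)ς(v_{j+1}⋯v_m w_g) + α(v_1⋯v_m)δ̄_1(g) gives a well-defined k-linear map δ_1 : A → A if and only if δ̂_1(v)ς̂(w) + α̂(v)δ̂_1(w) = δ̂_1(w)ς̂(v) + α̂(w)δ̂_1(v) for all v,w ∈ V; and (2) the assignment δ_2(v_1⋯v_m w_g) := Σ_{j=1}^m ς(α^{-1}(v_1⋯v_{j-1}))δ̂_2(v_j)v_{j+1}⋯v_m w_g + ς(α^{-1}(v_1⋯v_m))δ̄_2(g) gives a well-defined k-linear map δ_2 : A → A if and only if δ̂_2(v)w + ς̂(α̂^{-1}(v))δ̂_2(w) = δ̂_2(w)v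 + ς̂(α̂^{-1}(w))δ̂_2(v) for all v,w ∈ V. -/

import Mathlib

open TensorProduct

noncomputable section
namespace Paper

variable {k : Type*} [Field k]

section Combinators

variable {M N P Q M' N' P' M'' : Type*}
  [AddCommMonoid M] [AddCommMonoid N] [AddCommMonoid P] [AddCommMonoid Q]
  [AddCommMonoid M'] [AddCommMonoid N'] [AddCommMonoid P'] [AddCommMonoid M'']
  [Module k M] [Module k N] [Module k P] [Module k Q]
  [Module k M'] [Module k N'] [Module k P'] [Module k M'']

/-- `(s ⊗ id) ∘ (id ⊗ s)` : braid a pair of factors past `P`. -/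
def braidPast (f : N ⊗[k] P →ₗ[k] P ⊗[k] N') (g : M ⊗[k] P →ₗ[k] P ⊗[k] M') :
    (M ⊗[k] N) ⊗[k] P →ₗ[k] P ⊗[k] (M' ⊗[k] N') :=
  (TensorProduct.assoc k P M' N').toLinearMap
    ∘ₗ g.rTensor N'
    ∘ₗ (TensorProduct.assoc k M P N').symm.toLinearMap
    ∘ₗ f.lTensor M
    ∘ₗ (TensorProduct.assoc k M N P).toLinearMap

def braidUnder (f : M ⊗[k] N →ₗ[k] N' ⊗[k] M') (g : M' ⊗[k] P →ₗ[k] P' ⊗[k] M'') :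
    M ⊗[k] (N ⊗[k] P) →ₗ[k] (N' ⊗[k] P') ⊗[k] M'' :=
  (TensorProduct.assoc k N' P' M'').symm.toLinearMap
    ∘ₗ g.lTensor N'
    ∘ₗ (TensorProduct.assoc k N' M' P).toLinearMap
    ∘ₗ f.rTensor P
    ∘ₗ (TensorProduct.assoc k M N P).symm.toLinearMap

def midMap (f : N ⊗[k] P →ₗ[k] P' ⊗[k] N') :
    (M ⊗[k] N) ⊗[k] (P ⊗[k] Q) →ₗ[k] (M ⊗[k] P') ⊗[k] (N' ⊗[k] Q) :=
  (TensorProduct.assoc k M P' (N' ⊗[k] Q)).symm.toLinearMap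
    ∘ₗ ((TensorProduct.assoc k P' N' Q).toLinearMap.lTensor M)
    ∘ₗ ((f.rTensor Q).lTensor M)
    ∘ₗ ((TensorProduct.assoc k N P Q).symm.toLinearMap.lTensor M)
    ∘ₗ (TensorProduct.assoc k M N (P ⊗[k] Q)).toLinearMap

end Combinators

section Hq

variable (k)
variable (H : Type*) [Ring H]

/-- Axiomatisation of the Hopf algebra `H_q`. -/
structure HqData [HopfAlgebra k H] (q : k) where
  D₁ : H
  D₂ : H
  σ : Hˣ
  D_comm : D₁ * D₂ = D₂ * D₁
  σD₁ : q • ((σ : H) * D₁) = D₁ * (σ : H)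
  σD₂ : q • ((σ : H) * D₂) = D₂ * (σ : H)
  comul_D₁ : Coalgebra.comul (R := k) D₁ = D₁ ⊗ₜ[k] (σ : H) + 1 ⊗ₜ[k] D₁
  comul_D₂ : Coalgebra.comul (R := k) D₂ = D₂ ⊗ₜ[k] (1 : H) + (σ : H) ⊗ₜ[k] D₂
  comul_σ : Coalgebra.comul (R := k) ((σ : H)) = (σ : H) ⊗ₜ[k] (σ : H)
  counit_D₁ : Coalgebra.counit (R := k) D₁ = 0
  counit_D₂ : Coalgebra.counit (R := k) D₂ = 0
  counit_σ : Coalgebra.counit (R := k) ((σ : H)) = 1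
  basis_generic : (∀ l : ℕ, 2 ≤ l → ¬ IsPrimitiveRoot q l) →
      ∃ b : Module.Basis (ℤ × ℕ × ℕ) k H,
        ∀ i j m, b (i, j, m) = ((σ ^ i : Hˣ) : H) * D₁ ^ j * D₂ ^ m
  basis_root : ∀ l : ℕ, 2 ≤ l → IsPrimitiveRoot q l →
      D₁ ^ l = 0 ∧ D₂ ^ l = 0 ∧
      ∃ b : Module.Basis (ℤ × Fin l × Fin l) k H,
        ∀ i j m, b (i, j, m) = ((σ ^ i : Hˣ) : H) * D₁ ^ (j : ℕ) * D₂ ^ (m : ℕ)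

variable (A : Type*) [Ring A] [Algebra k A]

/-- A left transposition of a (standard, flip-braided) bialgebra `H` on an algebra `A`. -/
structure IsTransposition [HopfAlgebra k H] (s : H ⊗[k] A ≃ₗ[k] A ⊗[k] H) : Prop where
  unit_H : ∀ a : A, s ((1 : H) ⊗ₜ[k] a) = a ⊗ₜ[k] (1 : H)
  mul_H : s.toLinearMap ∘ₗ (LinearMap.mul' k H).rTensor A
      = (LinearMap.mul' k H).lTensor A ∘ₗ braidPast s.toLinearMap s.toLinearMap
  counit_compat : (TensorProduct.rid k A).toLinearMap
        ∘ₗ (Coalgebra.counit (R := k) (A := H)).lTensor A ∘ₗ s.toLinearMap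
      = (TensorProduct.lid k A).toLinearMap ∘ₗ (Coalgebra.counit (R := k) (A := H)).rTensor A
  comul_compat : (Coalgebra.comul (R := k) (A := H)).lTensor A ∘ₗ s.toLinearMap
      = braidPast s.toLinearMap s.toLinearMap ∘ₗ (Coalgebra.comul (R := k) (A := H)).rTensor A
  unit_A : ∀ h : H, s (h ⊗ₜ[k] (1 : A)) = (1 : A) ⊗ₜ[k] h
  mul_A : s.toLinearMap ∘ₗ (LinearMap.mul' k A).lTensor H
      = (LinearMap.mul' k A).rTensor H ∘ₗ braidUnder s.toLinearMap s.toLinearMap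
  braid_compat : braidPast s.toLinearMap s.toLinearMap
        ∘ₗ (TensorProduct.comm k H H).toLinearMap.rTensor A
      = (TensorProduct.comm k H H).toLinearMap.lTensor A
        ∘ₗ braidPast s.toLinearMap s.toLinearMap

/-- The action `H ⊗ A → A` attached to an algebra morphism `H →ₐ Module.End k A`. -/
def actMap [HopfAlgebra k H] (ρ : H →ₐ[k] Module.End k A) : H ⊗[k] A →ₗ[k] A :=
  TensorProduct.lift ρ.toLinearMap

/-- `(A, s)` is a left `H`-braided module algebra via the action `ρ`
(braid of `H` = flip). -/
structure IsModuleAlgebra [HopfAlgebra k H] (s : H ⊗[k] A ≃ₗ[k] A ⊗[k] H)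
    (ρ : H →ₐ[k] Module.End k A) : Prop where
  compat_s : s.toLinearMap ∘ₗ (actMap k H A ρ).lTensor H
        ∘ₗ (TensorProduct.assoc k H H A).toLinearMap
      = (actMap k H A ρ).rTensor H
        ∘ₗ (TensorProduct.assoc k H A H).symm.toLinearMap
        ∘ₗ s.toLinearMap.lTensor H
        ∘ₗ (TensorProduct.assoc k H H A).toLinearMap
        ∘ₗ (TensorProduct.comm k H H).toLinearMap.rTensor A
  mul_act : ∀ (h : H) (a b : A), ρ h (a * b)
      = (LinearMap.mul' k A
          ∘ₗ TensorProduct.map (actMap k H A ρ) (actMap k H A ρ)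
          ∘ₗ midMap s.toLinearMap)
        ((Coalgebra.comul (R := k) h) ⊗ₜ[k] (a ⊗ₜ[k] b))
  one_act : ∀ h : H, ρ h (1 : A) = Coalgebra.counit (R := k) h • (1 : A)

/-- `s` is a *good* transposition. -/
def GoodTransposition {q : k} [HopfAlgebra k H] (hq : HqData k H q)
    (s : H ⊗[k] A ≃ₗ[k] A ⊗[k] H) : Prop :=
  ∀ a : A, braidPast s.toLinearMap s.toLinearMap ((hq.D₁ ⊗ₜ[k] hq.D₂) ⊗ₜ[k] a)
    = a ⊗ₜ[k] (hq.D₁ ⊗ₜ[k] hq.D₂)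

end Hq


section Crossed

variable {G : Type*} [Group G] {V : Type*} [AddCommGroup V] [Module k V]

variable (G) in
/-- `f` is a normal 2-cocycle on `G` with values in `kˣ`. -/
structure IsCocycle (f : G → G → kˣ) : Prop where
  one_left : ∀ g, f 1 g = 1
  one_right : ∀ g, f g 1 = 1
  cocycle : ∀ g h l, f g h * f (g * h) l = f g (h * l) * f h l

variable (A : Type*) [Ring A] [Algebra k A]

/-- Axiomatisation of the crossed product `S(V) #_f G`:  `A` is generated by a copy of `V`
(with commuting elements, generating a copy of the symmetric algebra) and elements `w g`,
and is free as a module over the symmetric part with basis `{w g}`. -/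
structure CrossedProduct (ρV : Representation k G V) (f : G → G → kˣ) where
  ι : V →ₗ[k] A
  w : G → A
  w_one : w 1 = 1
  ι_comm : ∀ v v', ι v * ι v' = ι v' * ι v
  w_ι : ∀ g v, w g * ι v = ι (ρV g v) * w g
  w_mul : ∀ g h, w g * w h = (f g h : k) • w (g * h)
  isBasis : ∀ {n : ℕ} (bV : Module.Basis (Fin n) k V),
      ∃ bA : Module.Basis ((Fin n → ℕ) × G) k A,
        ∀ d g, bA (d, g) = (List.ofFn fun i => ι (bV i) ^ d i).prod * w g

namespace CrossedProduct

variable {A} {ρV : Representation k G V} {f : G → G → kˣ}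

/-- The product in `A` of the images of a list of elements of `V`. -/
def mon (cp : CrossedProduct A ρV f) (l : List V) : A := (l.map cp.ι).prod

/-- `v₁ ⋯ v_{j-1}` : the image of the prefix of a monomial. -/
def pre (cp : CrossedProduct A ρV f) {m : ℕ} (v : Fin m → V) (j : Fin m) : A :=
  cp.mon ((List.ofFn v).take j)

/-- `v_{j+1} ⋯ v_m` : the image of the suffix of a monomial. -/
def suf (cp : CrossedProduct A ρV f) {m : ℕ} (v : Fin m → V) (j : Fin m) : A :=
  cp.mon ((List.ofFn v).drop (j + 1))

/-- The subalgebra `S(V)` of the crossed product. -/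
def SV (cp : CrossedProduct A ρV f) : Subalgebra k A :=
  Algebra.adjoin k (Set.range cp.ι)

/-- The subalgebra `S(W)` of the crossed product, for a subspace `W ≤ V`. -/
def SW (cp : CrossedProduct A ρV f) (W : Submodule k V) : Subalgebra k A :=
  Algebra.adjoin k (cp.ι '' (W : Set V))

end CrossedProduct

/-- A linear endomorphism of `V` is `k[G]`-linear if it commutes with the `G`-action. -/
def GLinear (ρV : Representation k G V) (φ : V →ₗ[k] V) : Prop :=
  ∀ g v, φ (ρV g v) = ρV g (φ v)

variable (G) in
/-- `χ : G → kˣ` is a group homomorphism. -/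
def IsCharacter (χ : G → kˣ) : Prop := ∀ g h, χ (g * h) = χ g * χ h

section Defs

variable {H : Type*} [Ring H] [HopfAlgebra k H] {q : k}
variable {ρV : Representation k G V} {f : G → G → kˣ}

/-- `s` is the (good) transposition of `H_q` on `A` associated with the automorphism `α`. -/
def AssocTransposition (hq : HqData k H q)
    (s : H ⊗[k] A ≃ₗ[k] A ⊗[k] H) (α : A ≃ₐ[k] A) : Prop :=
  IsTransposition k H A s ∧ GoodTransposition k H A hq s
    ∧ (∀ a : A, s (hq.D₁ ⊗ₜ[k] a) = α a ⊗ₜ[k] hq.D₁)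
    ∧ (∀ a : A, s (hq.D₂ ⊗ₜ[k] a) = α.symm a ⊗ₜ[k] hq.D₂)

variable {A}

/-- `ς` is the endomorphism of `A` determined by `ς̂` and `χ_ς`. -/
def SigmaDef (cp : CrossedProduct A ρV f) (ςhat : V →ₗ[k] V) (χς : G → kˣ)
    (ς : Module.End k A) : Prop :=
  ∀ (m : ℕ) (v : Fin m → V) (g : G),
    ς (cp.mon (List.ofFn v) * cp.w g)
      = (χς g : k) • (cp.mon (List.ofFn fun i => ςhat (v i)) * cp.w g)

/-- `δ₁` is determined by `δ̂₁`, `δ̄₁` via the `(α, ς)`-twisted Leibniz formula. -/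
def Delta1Def (cp : CrossedProduct A ρV f) (α : A ≃ₐ[k] A) (ς : Module.End k A)
    (δhat : V →ₗ[k] A) (δbar : G → A) (δ : Module.End k A) : Prop :=
  ∀ (m : ℕ) (v : Fin m → V) (g : G),
    δ (cp.mon (List.ofFn v) * cp.w g)
      = (∑ j : Fin m, α (cp.pre v j) * δhat (v j) * ς (cp.suf v j * cp.w g))
        + α (cp.mon (List.ofFn v)) * δbar g

/-- `δ₂` is determined by `δ̂₂`, `δ̄₂` via the `(ς ∘ α⁻¹, id)`-twisted Leibniz formula. -/
def Delta2Def (cp : CrossedProduct A ρV f) (α : A ≃ₐ[k] A) (ς : Module.End k A)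
    (δhat : V →ₗ[k] A) (δbar : G → A) (δ : Module.End k A) : Prop :=
  ∀ (m : ℕ) (v : Fin m → V) (g : G),
    δ (cp.mon (List.ofFn v) * cp.w g)
      = (∑ j : Fin m, ς (α.symm (cp.pre v j)) * δhat (v j) * (cp.suf v j * cp.w g))
        + ς (α.symm (cp.mon (List.ofFn v))) * δbar g

/-- There is an `H_q`-braided module algebra structure on `(A, s)` with the
prescribed values of the action on `V` and on the `w_g`. -/
def HasHqModuleStructure (hq : HqData k H q) (cp : CrossedProduct A ρV f)
    (s : H ⊗[k] A ≃ₗ[k] A ⊗[k] H) (ςhat : V →ₗ[k] V) (χς : G → kˣ)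
    (δhat1 δhat2 : V →ₗ[k] A) (δbar1 δbar2 : G → A) : Prop :=
  ∃ ρ : H →ₐ[k] Module.End k A, IsModuleAlgebra k H A s ρ
    ∧ (∀ v : V, ρ (hq.σ : H) (cp.ι v) = cp.ι (ςhat v))
    ∧ (∀ g : G, ρ (hq.σ : H) (cp.w g) = (χς g : k) • cp.w g)
    ∧ (∀ v : V, ρ hq.D₁ (cp.ι v) = δhat1 v)
    ∧ (∀ g : G, ρ hq.D₁ (cp.w g) = δbar1 g)
    ∧ (∀ v : V, ρ hq.D₂ (cp.ι v) = δhat2 v)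
    ∧ (∀ g : G, ρ hq.D₂ (cp.w g) = δbar2 g)

end Defs

end Crossed

end Paper

/-!
A twisted derivation `δ` of `A` is computed on a word `v₁ ⋯ vₘ w_g` by peeling off one letter
at a time with the twisted Leibniz rule. Since the `vᵢ` commute in `A`, this recipe is well
defined exactly when its value does not depend on the order of the letters. Reorderings are
generated by adjacent swaps, and swapping `v, w` changes the value by the difference of the two
sides of the stated identity, times a common right factor; so the identity is necessary (take
`m = 2`, `g = 1`) and sufficient. Given it, `δ` is defined on the basis `{v^d w_g}` and agrees
with the recipe on all words because both sides are multilinear in the letters.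
-/

theorem List.perm_flatten_ofFn_replicate_count {n : ℕ} (l : List (Fin n)) :
    l.Perm (List.ofFn fun i => List.replicate (l.count i) i).flatten :=
  List.perm_iff_count.2 fun a => by
    simp [List.count_flatten, List.count_replicate, List.sum_ofFn]

namespace Paper

section ConsMul

variable {R M B : Type*} [CommSemiring R] [AddCommMonoid M] [Module R M] [Semiring B]
  [Algebra R B] {m : ℕ}

def consMul (F : M →ₗ[R] B) (P : MultilinearMap R (fun _ : Fin m => M) B) :
    MultilinearMap R (fun _ : Fin (m + 1) => M) B :=
  LinearMap.uncurryLeft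
    { toFun := fun x => (LinearMap.mulLeft R (F x)).compMultilinearMap P
      map_add' := fun x y => by ext; simp [add_mul]
      map_smul' := fun c x => by ext; simp }

@[simp] lemma consMul_apply (F : M →ₗ[R] B) (P : MultilinearMap R (fun _ : Fin m => M) B)
    (v : Fin (m + 1) → M) : consMul F P v = F (v 0) * P fun i => v i.succ := rfl

end ConsMul

namespace CrossedProduct

variable {k : Type*} [Field k] {G : Type*} [Group G] {V : Type*} [AddCommGroup V] [Module k V]
  {A : Type*} [Ring A] [Algebra k A] {ρV : Representation k G V} {f : G → G → kˣ}
  (cp : CrossedProduct A ρV f)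

@[simp] lemma mon_nil : cp.mon ([] : List V) = 1 := rfl

@[simp] lemma mon_cons (x : V) (l : List V) : cp.mon (x :: l) = cp.ι x * cp.mon l :=
  List.prod_cons

lemma mon_perm {l l' : List V} (h : l.Perm l') : cp.mon l = cp.mon l' :=
  (h.map cp.ι).prod_eq'
    (List.pairwise_map.2 (List.pairwise_of_forall_mem_list fun a _ b _ => cp.ι_comm a b))

lemma map_mon {F : Type*} [FunLike F A A] [MonoidHomClass F A A] (φ : F) {φhat : V → V}
    (hφ : ∀ v, φ (cp.ι v) = cp.ι (φhat v)) (l : List V) :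
    φ (cp.mon l) = cp.mon (l.map φhat) := by
  simp only [mon, map_list_prod, List.map_map, Function.comp_def, hφ]

def monMultilinear (m : ℕ) : MultilinearMap k (fun _ : Fin m => V) A :=
  (MultilinearMap.mkPiAlgebraFin k m A).compLinearMap fun _ => cp.ι

@[simp] lemma monMultilinear_apply {m : ℕ} (v : Fin m → V) :
    cp.monMultilinear m v = cp.mon (List.ofFn v) := by
  simp [monMultilinear, mon, List.map_ofFn, Function.comp_def]

lemma mon_flatten_replicate {n : ℕ} (b : Fin n → V) (d : Fin n → ℕ) :
    cp.mon (((List.ofFn fun i => List.replicate (d i) i).flatten).map b)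
      = (List.ofFn fun i => cp.ι (b i) ^ d i).prod := by
  simp [mon, List.map_flatten, List.prod_flatten, List.map_ofFn, Function.comp_def,
    List.map_replicate, List.prod_replicate]

section TwistedLeibniz

variable (φhat ψhat : V →ₗ[k] V) (δhat : V →ₗ[k] A) (δbar w' : G → A)

/-- `δ (v₁ ⋯ vₘ w_g)` for the `(φ, ψ)`-twisted derivation `δ`, where `φ (vᵢ) = φhat vᵢ` and
`ψ (v₁ ⋯ vₘ w_g) = ψhat v₁ ⋯ ψhat vₘ * w' g`. -/
def twistedLeibniz : List V → G → A
  | [], g => δbar g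
  | x :: l, g => δhat x * (cp.mon (l.map ψhat) * w' g) + cp.ι (φhat x) * twistedLeibniz l g

def IsLeibnizSymmetric : Prop :=
  ∀ v w : V, δhat v * cp.ι (ψhat w) + cp.ι (φhat v) * δhat w
    = δhat w * cp.ι (ψhat v) + cp.ι (φhat w) * δhat v

variable {φhat ψhat δhat} in
lemma twistedLeibniz_perm (hsymm : cp.IsLeibnizSymmetric φhat ψhat δhat)
    {l l' : List V} (h : l.Perm l') (g : G) :
    cp.twistedLeibniz φhat ψhat δhat δbar w' l g
      = cp.twistedLeibniz φhat ψhat δhat δbar w' l' g := by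
  induction h with
  | nil => rfl
  | cons x h ih => simp only [twistedLeibniz, ih, cp.mon_perm (h.map ψhat)]
  | swap x y l =>
    set t := cp.twistedLeibniz φhat ψhat δhat δbar w' l g
    have hxy := congrArg (· * (cp.mon (l.map ψhat) * w' g)) (hsymm y x)
    have hφ : cp.ι (φhat y) * (cp.ι (φhat x) * t) = cp.ι (φhat x) * (cp.ι (φhat y) * t) := by
      rw [← mul_assoc, cp.ι_comm, mul_assoc]
    simp only [add_mul, mul_assoc] at hxy
    simp only [twistedLeibniz, List.map_cons, mon_cons, mul_add, mul_assoc]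
    rw [← add_assoc, ← add_assoc, hxy, hφ]
  | trans _ _ ih₁ ih₂ => rw [ih₁, ih₂]

lemma twistedLeibniz_ofFn {m : ℕ} (v : Fin m → V) (g : G) :
    cp.twistedLeibniz φhat ψhat δhat δbar w' (List.ofFn v) g
      = (∑ j : Fin m, cp.mon (((List.ofFn v).take j).map φhat) * δhat (v j)
          * (cp.mon (((List.ofFn v).drop (j + 1)).map ψhat) * w' g))
        + cp.mon ((List.ofFn v).map φhat) * δbar g := by
  induction m with
  | zero => simp [twistedLeibniz]
  | succ m ih =>
    simp only [List.ofFn_succ, twistedLeibniz, ih, Fin.sum_univ_succ, Fin.val_zero,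
      Fin.val_succ, List.take_zero, List.take_succ_cons, List.drop_succ_cons, List.drop_zero,
      List.map_cons, List.map_nil, mon_cons, mon_nil, one_mul, mul_add, Finset.mul_sum,
      mul_assoc, add_assoc]

def twistedLeibnizMultilinear : (m : ℕ) → G → MultilinearMap k (fun _ : Fin m => V) A
  | 0, g => MultilinearMap.constOfIsEmpty k _ (δbar g)
  | m + 1, g =>
    consMul δhat ((LinearMap.mulRight k (w' g)).compMultilinearMap
        ((cp.monMultilinear m).compLinearMap fun _ => ψhat))
      + consMul (cp.ι ∘ₗ φhat) (twistedLeibnizMultilinear m g)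

lemma twistedLeibnizMultilinear_apply {m : ℕ} (g : G) (v : Fin m → V) :
    cp.twistedLeibnizMultilinear φhat ψhat δhat δbar w' m g v
      = cp.twistedLeibniz φhat ψhat δhat δbar w' (List.ofFn v) g := by
  induction m with
  | zero => simp [twistedLeibnizMultilinear, twistedLeibniz]
  | succ m ih =>
    simp [twistedLeibnizMultilinear, twistedLeibniz, ih, List.ofFn_succ, List.map_ofFn,
      Function.comp_def]

variable {φhat ψhat δhat} in
theorem exists_eq_twistedLeibniz [FiniteDimensional k V]
    (hsymm : cp.IsLeibnizSymmetric φhat ψhat δhat) :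
    ∃ δ : Module.End k A, ∀ (m : ℕ) (v : Fin m → V) (g : G),
      δ (cp.mon (List.ofFn v) * cp.w g)
        = cp.twistedLeibniz φhat ψhat δhat δbar w' (List.ofFn v) g := by
  set bV := Module.finBasis k V
  obtain ⟨bA, hbA⟩ := cp.isBasis bV
  let sorted (d : Fin (Module.finrank k V) → ℕ) : List V :=
    ((List.ofFn fun i => List.replicate (d i) i).flatten).map bV
  let δ : Module.End k A :=
    bA.constr k fun p => cp.twistedLeibniz φhat ψhat δhat δbar w' (sorted p.1) p.2
  refine ⟨δ, fun m v g => ?_⟩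
  suffices ((δ : A →ₗ[k] A) ∘ₗ LinearMap.mulRight k (cp.w g)).compMultilinearMap
      (cp.monMultilinear m) = cp.twistedLeibnizMultilinear φhat ψhat δhat δbar w' m g by
    simpa [twistedLeibnizMultilinear_apply] using DFunLike.congr_fun this v
  refine Module.Basis.ext_multilinear (fun _ => bV) fun t => ?_
  have hsort : (List.ofFn fun i => bV (t i)).Perm (sorted fun i => (List.ofFn t).count i) := by
    simpa [sorted, List.map_ofFn, Function.comp_def] using
      (List.perm_flatten_ofFn_replicate_count (List.ofFn t)).map bV
  simp only [LinearMap.compMultilinearMap_apply, monMultilinear_apply, LinearMap.coe_comp,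
    Function.comp_apply, LinearMap.mulRight_apply, twistedLeibnizMultilinear_apply,
    cp.mon_perm hsort, cp.twistedLeibniz_perm δbar w' hsymm hsort, sorted, mon_flatten_replicate,
    ← hbA, δ, Module.Basis.constr_basis]

variable {φhat ψhat δhat} in
theorem isLeibnizSymmetric_of_eq_twistedLeibniz (hw' : w' 1 = 1) (δ : A → A)
    (hδ : ∀ l : List V, δ (cp.mon l * cp.w 1) = cp.twistedLeibniz φhat ψhat δhat δbar w' l 1) :
    cp.IsLeibnizSymmetric φhat ψhat δhat := by
  intro v w
  have hvw := (hδ [v, w]).symm.trans ((cp.mon_perm (.swap w v [])).symm ▸ hδ [w, v])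
  have hφ : cp.ι (φhat v) * (cp.ι (φhat w) * δbar 1)
      = cp.ι (φhat w) * (cp.ι (φhat v) * δbar 1) := by
    rw [← mul_assoc, cp.ι_comm, mul_assoc]
  simp only [twistedLeibniz, List.map_cons, List.map_nil, mon_cons, mon_nil, hw', mul_one,
    mul_add, ← add_assoc, hφ] at hvw
  exact add_right_cancel hvw

theorem exists_twistedDerivation_iff [FiniteDimensional k V] (φ ψ : A → A)
    (hφ : ∀ l : List V, φ (cp.mon l) = cp.mon (l.map φhat))
    (hψ : ∀ (l : List V) (g : G), ψ (cp.mon l * cp.w g) = cp.mon (l.map ψhat) * w' g)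
    (hw' : w' 1 = 1) :
    (∃ δ : Module.End k A, ∀ (m : ℕ) (v : Fin m → V) (g : G),
        δ (cp.mon (List.ofFn v) * cp.w g)
          = (∑ j : Fin m, φ (cp.pre v j) * δhat (v j) * ψ (cp.suf v j * cp.w g))
            + φ (cp.mon (List.ofFn v)) * δbar g)
      ↔ cp.IsLeibnizSymmetric φhat ψhat δhat := by
  have hsum (m : ℕ) (v : Fin m → V) (g : G) :
      (∑ j : Fin m, φ (cp.pre v j) * δhat (v j) * ψ (cp.suf v j * cp.w g))
        + φ (cp.mon (List.ofFn v)) * δbar g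
        = cp.twistedLeibniz φhat ψhat δhat δbar w' (List.ofFn v) g := by
    simp only [twistedLeibniz_ofFn, pre, suf, hφ, hψ]
  simp only [hsum]
  refine ⟨fun ⟨δ, hδ⟩ => cp.isLeibnizSymmetric_of_eq_twistedLeibniz δbar w' hw' δ fun l => ?_,
    cp.exists_eq_twistedLeibniz δbar w'⟩
  simpa using hδ l.length l.get 1

end TwistedLeibniz

end CrossedProduct

end Paper

open Paper in
theorem statement_9_general {k : Type*} [Field k]
    {G : Type*} [Group G] {V : Type*} [AddCommGroup V] [Module k V] [FiniteDimensional k V]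
    (ρV : Representation k G V) (f : G → G → kˣ)
    {A : Type*} [Ring A] [Algebra k A] (cp : CrossedProduct A ρV f)
    (αhat : V ≃ₗ[k] V)
    (α : A ≃ₐ[k] A)
    (hαι : ∀ v : V, α (cp.ι v) = cp.ι (αhat v))
    (ςhat : V ≃ₗ[k] V)
    (χς : G → kˣ) (hχς : IsCharacter G χς)
    (ς : Module.End k A) (hςdef : SigmaDef cp (ςhat : V →ₗ[k] V) χς ς)
    (δhat₁ δhat₂ : V →ₗ[k] A) (δbar₁ δbar₂ : G → A) :
    ((∃ δ₁ : Module.End k A, Delta1Def cp α ς δhat₁ δbar₁ δ₁)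
      ↔ ∀ v w : V,
          δhat₁ v * cp.ι (ςhat w) + cp.ι (αhat v) * δhat₁ w
            = δhat₁ w * cp.ι (ςhat v) + cp.ι (αhat w) * δhat₁ v)
    ∧ ((∃ δ₂ : Module.End k A, Delta2Def cp α ς δhat₂ δbar₂ δ₂)
      ↔ ∀ v w : V,
          δhat₂ v * cp.ι w + cp.ι (ςhat (αhat.symm v)) * δhat₂ w
            = δhat₂ w * cp.ι v + cp.ι (ςhat (αhat.symm w)) * δhat₂ v) := by
  have hχς_one : χς 1 = 1 := (MonoidHom.mk' χς hχς).map_one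
  have hςw (l : List V) (g : G) :
      ς (cp.mon l * cp.w g) = cp.mon (l.map ςhat) * ((χς g : k) • cp.w g) := by
    simpa [mul_smul_comm, List.map_ofFn] using hςdef l.length l.get g
  have hςmon (l : List V) : ς (cp.mon l) = cp.mon (l.map ςhat) := by
    simpa [cp.w_one, hχς_one] using hςw l 1
  have hαsymm (v : V) : α.symm (cp.ι v) = cp.ι (αhat.symm v) := by
    rw [AlgEquiv.symm_apply_eq, hαι, LinearEquiv.apply_symm_apply]
  constructor
  · exact cp.exists_twistedDerivation_iff _ _ δhat₁ δbar₁ _ α ς (cp.map_mon α hαι) hςw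
      (by simp [hχς_one, cp.w_one])
  · exact cp.exists_twistedDerivation_iff (ςhat.toLinearMap ∘ₗ αhat.symm.toLinearMap)
      LinearMap.id δhat₂ δbar₂ cp.w (ς ∘ α.symm) id
      (fun l => by
        simp only [Function.comp_apply, cp.map_mon α.symm hαsymm, hςmon, List.map_map]; rfl)
      (by simp) cp.w_one

open Paper in
/-- Well-definedness of the twisted derivations `δ₁`, `δ₂` on the crossed
product `A = S(V) #_f G`. -/
theorem statement_9 {k : Type*} [Field k]
    {G : Type*} [Group G] {V : Type*} [AddCommGroup V] [Module k V] [FiniteDimensional k V]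
    (ρV : Representation k G V) (f : G → G → kˣ) (hf : IsCocycle G f)
    {A : Type*} [Ring A] [Algebra k A] (cp : CrossedProduct A ρV f)
    (αhat : V ≃ₗ[k] V) (hαG : GLinear ρV (αhat : V →ₗ[k] V))
    (χα : G → kˣ) (hχα : IsCharacter G χα)
    (α : A ≃ₐ[k] A)
    (hαι : ∀ v : V, α (cp.ι v) = cp.ι (αhat v))
    (hαw : ∀ g : G, α (cp.w g) = (χα g : k) • cp.w g)
    (ςhat : V ≃ₗ[k] V) (hςG : GLinear ρV (ςhat : V →ₗ[k] V))
    (χς : G → kˣ) (hχς : IsCharacter G χς)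
    (ς : Module.End k A) (hςdef : SigmaDef cp (ςhat : V →ₗ[k] V) χς ς)
    (δhat₁ δhat₂ : V →ₗ[k] A) (δbar₁ δbar₂ : G → A) :
    ((∃ δ₁ : Module.End k A, Delta1Def cp α ς δhat₁ δbar₁ δ₁)
      ↔ ∀ v w : V,
          δhat₁ v * cp.ι (ςhat w) + cp.ι (αhat v) * δhat₁ w
            = δhat₁ w * cp.ι (ςhat v) + cp.ι (αhat w) * δhat₁ v)
    ∧ ((∃ δ₂ : Module.End k A, Delta2Def cp α ς δhat₂ δbar₂ δ₂)
      ↔ ∀ v w : V,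
          δhat₂ v * cp.ι w + cp.ι (ςhat (αhat.symm v)) * δhat₂ w
            = δhat₂ w * cp.ι v + cp.ι (ςhat (αhat.symm w)) * δhat₂ v) :=
  statement_9_general ρV f cp αhat α hαι ςhat χς hχς ς hςdef δhat₁ δhat₂ δbar₁ δbar₂
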